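/- arXiv:1802.06748 — 2 statements merged into one kernel-verified Lean document; each statement's English description precedes it below -/
import Mathlib

section
/- Consider the graph transformation where every node simultaneously adds edges between each pair of its neighbors. Starting from a connected graph of diameter d ≥ 1, after O(log d) iterations (specifically, at most ⌈log_{3/2} d⌉ + 1 iterations) the graph becomes a complete graph. -/
/-- The clique-completion transformation: every node simultaneously connects
all pairs of its neighbors. -/
def cliquify {V : Type*} (G : SimpleGraph V) : SimpleGraph V where
  Adj a b := a ≠ b ∧ (G.Adj a b ∨ ∃ w : V, G.Adj w a ∧ G.Adj w b)
  symm := by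
    constructor
    intro a b ⟨hne, h⟩
    refine ⟨hne.symm, ?_⟩
    rcases h with h | ⟨w, h1, h2⟩
    · exact Or.inl h.symm
    · exact Or.inr ⟨w, h2, h1⟩
  loopless := by constructor; intro a ⟨hne, _⟩; exact hne rfl

open SimpleGraph
private lemma walk_to_getVert {V : Type*} {G : SimpleGraph V} :
    ∀ {u v : V} (p : G.Walk u v) (m : ℕ), ∃ q : G.Walk u (p.getVert m), q.length ≤ m := by
  intro u v p
  induction p with
  | nil => intro m; exact ⟨Walk.nil, by simp⟩
  | cons h q ih =>
    intro m
    cases m with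
    | zero => exact ⟨Walk.nil, by simp; rfl⟩
    | succ m =>
      obtain ⟨r, hr⟩ := ih m
      exact ⟨r.cons h, by simpa using Nat.succ_le_succ hr⟩

private lemma walk_from_getVert {V : Type*} {G : SimpleGraph V} :
    ∀ {u v : V} (p : G.Walk u v) (m : ℕ),
      ∃ q : G.Walk (p.getVert m) v, q.length ≤ p.length - m := by
  intro u v p
  induction p with
  | nil => intro m; exact ⟨Walk.nil.copy (by simp [Walk.getVert]) rfl, by simp⟩
  | cons h q ih =>
    intro m
    cases m with
    | zero => exact ⟨(q.cons h).copy (by simp) rfl, by simp⟩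
    | succ m =>
      obtain ⟨r, hr⟩ := ih m
      exact ⟨r, by simpa using hr⟩

private lemma iterate_adj_iff {V : Type*} {G : SimpleGraph V} (hconn : G.Connected) :
    ∀ (k : ℕ) (a b : V), ((cliquify (V := V))^[k] G).Adj a b ↔ a ≠ b ∧ G.dist a b ≤ 2 ^ k := by
  intro k
  induction k with
  | zero =>
    intro a b
    simp only [Function.iterate_zero, id_eq, pow_zero]
    constructor
    · intro h; exact ⟨h.ne, SimpleGraph.dist_le h.toWalk⟩
    · rintro ⟨hne, hle⟩
      have hz : G.dist a b ≠ 0 := by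
        simp [SimpleGraph.dist_ne_zero_iff_ne_and_reachable, hne, hconn a b]
      obtain ⟨p, hp⟩ := SimpleGraph.exists_walk_of_dist_ne_zero hz
      have h1 : p.length = 1 := le_antisymm (hp ▸ hle) (Nat.one_le_iff_ne_zero.2
        (fun h0 => hz (by omega)))
      have := p.adj_getVert_succ (i := 0) (by omega)
      rwa [p.getVert_zero, show (0+1 : ℕ) = p.length from h1.symm, p.getVert_length] at this
  | succ k ih =>
    intro a b
    rw [Function.iterate_succ_apply']
    constructor
    · rintro ⟨hne, h | ⟨w, h1, h2⟩⟩
      · obtain ⟨-, hd⟩ := (ih a b).mp h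
        exact ⟨hne, hd.trans (Nat.pow_le_pow_right (by norm_num) (Nat.le_succ k))⟩
      · obtain ⟨hwa, hda⟩ := (ih w a).mp h1
        obtain ⟨hwb, hdb⟩ := (ih w b).mp h2
        refine ⟨hne, ?_⟩
        calc G.dist a b ≤ G.dist a w + G.dist w b := hconn.dist_triangle
          _ ≤ 2 ^ k + 2 ^ k := by rw [SimpleGraph.dist_comm]; omega
          _ = 2 ^ (k + 1) := by ring
    · rintro ⟨hne, hle⟩
      refine ⟨hne, ?_⟩
      by_cases hsmall : G.dist a b ≤ 2 ^ k
      · exact Or.inl ((ih a b).mpr ⟨hne, hsmall⟩)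
      · push_neg at hsmall
        have hz : G.dist a b ≠ 0 := by omega
        obtain ⟨p, hp⟩ := SimpleGraph.exists_walk_of_dist_ne_zero hz
        obtain ⟨q1, hq1⟩ := walk_to_getVert p (2 ^ k)
        obtain ⟨q2, hq2⟩ := walk_from_getVert p (2 ^ k)
        have hdaw : G.dist a (p.getVert (2 ^ k)) ≤ 2 ^ k :=
          (SimpleGraph.dist_le q1).trans hq1
        have hpow : 2 ^ (k + 1) = 2 ^ k + 2 ^ k := by ring
        have hdwb : G.dist (p.getVert (2 ^ k)) b ≤ 2 ^ k :=
          (SimpleGraph.dist_le q2).trans (by omega)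
        have hwa : p.getVert (2 ^ k) ≠ a := by
          intro h; rw [h] at hdwb; omega
        have hwb : p.getVert (2 ^ k) ≠ b := by
          intro h; rw [h] at hdaw; omega
        refine Or.inr ⟨p.getVert (2 ^ k), (ih _ a).mpr ⟨hwa, ?_⟩, (ih _ b).mpr ⟨hwb, hdwb⟩⟩
        rwa [SimpleGraph.dist_comm]

/-- Starting from a connected graph of diameter `d ≥ 1`, after at most
`⌈log_{3/2} d⌉ + 1` iterations of clique-completion the graph is complete. -/
theorem stmt4 {V : Type*} [Fintype V] (G : SimpleGraph V)
    (hconn : G.Connected) (d : ℕ) (hd : 1 ≤ d) (hdiam : G.diam = d) :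
    cliquify^[⌈Real.logb (3 / 2) d⌉₊ + 1] G = ⊤ := by
  set n := ⌈Real.logb (3 / 2) d⌉₊ with hn
  have hdle : d ≤ 2 ^ (n + 1) := by
    have h1 : (d : ℝ) = (3 / 2 : ℝ) ^ (Real.logb (3 / 2) d) :=
      (Real.rpow_logb (by norm_num) (by norm_num) (by positivity)).symm
    have h2 : (3 / 2 : ℝ) ^ (Real.logb (3 / 2) d) ≤ (3 / 2 : ℝ) ^ (n : ℝ) :=
      Real.rpow_le_rpow_of_exponent_le (by norm_num) (Nat.le_ceil _)
    have h3 : (3 / 2 : ℝ) ^ (n : ℝ) = (3 / 2 : ℝ) ^ n := Real.rpow_natCast _ n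
    have h4 : (3 / 2 : ℝ) ^ n ≤ (2 : ℝ) ^ n := pow_le_pow_left₀ (by norm_num) (by norm_num) n
    have h5 : (2 : ℝ) ^ n ≤ (2 : ℝ) ^ (n + 1) :=
      pow_le_pow_right₀ (by norm_num) (Nat.le_succ n)
    have : (d : ℝ) ≤ (2 : ℝ) ^ (n + 1) := by
      rw [h1]; calc _ ≤ _ := h2
        _ = _ := h3
        _ ≤ _ := h4
        _ ≤ _ := h5
    exact_mod_cast this
  ext a b
  rw [iterate_adj_iff hconn (n + 1) a b, SimpleGraph.top_adj]
  constructor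
  · exact fun h => h.1
  · intro hne
    refine ⟨hne, ?_⟩
    have hdist : G.dist a b ≤ G.diam :=
      SimpleGraph.dist_le_diam (SimpleGraph.ediam_ne_top_of_diam_ne_zero (by omega))
    omega
end

section
/- Let (n_i) be a sequence of positive integers and (B_i) positive reals with B_i ≥ d³ for all i, such that n_{i+1} ≤ n_i·(1 − √(B_i)/(d + √(B_i))) = n_i·d/(d + √(B_i)), and B_{i+1} = B_i·n_i/n_{i+1}. If n_0 = n and B_0 = d³ with d ≥ 2, then n_i < 1 (i.e., the process terminates) after O(log log n) phases. -/
private lemma key_eq9 (n e : ℝ) :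
    (n * (2:ℝ) ^ ((1:ℝ) - e)) ^ 3 = (2 * n) * (n * (2:ℝ) ^ ((1:ℝ) - (3/2) * e)) ^ 2 := by
  rw [mul_pow, mul_pow, ← Real.rpow_natCast ((2:ℝ) ^ ((1:ℝ)-e)) 3,
      ← Real.rpow_natCast ((2:ℝ) ^ ((1:ℝ)-(3/2)*e)) 2,
      ← Real.rpow_mul (by norm_num), ← Real.rpow_mul (by norm_num)]
  push_cast
  have h : ((1:ℝ)-e)*3 = 1 + ((1:ℝ)-(3/2)*e)*2 := by ring
  rw [h, Real.rpow_add (by norm_num), Real.rpow_one]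
  ring

/-- The phase process removing at least a `√(B_i)/(d+√(B_i))`-fraction of the
`n_i` remaining nodes each phase (so `n_{i+1} ≤ n_i·d/(d+√(B_i))`), with
budgets rescaled so that `n_i·B_i` is invariant and `B_i ≥ d³` throughout,
terminates (`n_i ≤ 1`) within `O(log log n)` phases: there are an absolute
constant `C` and a threshold `N` such that for all `n ≥ N` some phase
`i ≤ C·log₂ log₂ n` has `n_i ≤ 1`. -/
theorem stmt9 : ∃ (C : ℝ) (N : ℕ), 0 < C ∧ ∀ (d n : ℕ), 2 ≤ d → N ≤ n →
    ∀ (ns : ℕ → ℕ) (B : ℕ → ℝ),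
      ns 0 = n → B 0 = (d : ℝ) ^ 3 →
      (∀ i, (d : ℝ) ^ 3 ≤ B i) →
      (∀ i, 0 < ns i →
        (ns (i + 1) : ℝ) ≤ (ns i : ℝ) * d / ((d : ℝ) + Real.sqrt (B i))) →
      (∀ i, 0 < ns (i + 1) → B (i + 1) = B i * ns i / ns (i + 1)) →
      ∃ i : ℕ, (i : ℝ) ≤ C * Real.logb 2 (Real.logb 2 n) ∧ ns i ≤ 1 := by
  refine ⟨5, 4, by norm_num, ?_⟩
  intro d n hd hn ns B hns0 hB0 hBlb hstep hBrec
  by_contra hcon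
  push_neg at hcon
  set L := Real.logb 2 (Real.logb 2 n) with hLdef
  have hn4 : (4:ℝ) ≤ (n:ℝ) := by exact_mod_cast hn
  have hnpos : (0:ℝ) < (n:ℝ) := by linarith
  have hlogn : (2:ℝ) ≤ Real.logb 2 n := by
    rw [Real.le_logb_iff_rpow_le (by norm_num) hnpos]
    calc (2:ℝ)^(2:ℝ) = (2:ℝ)^(2:ℕ) := by
          exact_mod_cast Real.rpow_natCast 2 2
      _ ≤ n := by norm_num; linarith
  have hlogn0 : (0:ℝ) < Real.logb 2 n := by linarith
  have hL1 : (1:ℝ) ≤ L := by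
    rw [hLdef, Real.le_logb_iff_rpow_le (by norm_num) hlogn0, Real.rpow_one]
    exact hlogn
  have hdR : (2:ℝ) ≤ (d:ℝ) := by exact_mod_cast hd
  have hd0 : (0:ℝ) < (d:ℝ) := by linarith
  set k := ⌊5 * L⌋₊ with hkdef
  have hk5 : (k:ℝ) ≤ 5 * L := Nat.floor_le (by linarith)
  have hk4 : 4 * L < (k:ℝ) := by
    have := Nat.lt_floor_add_one (5 * L)
    rw [← hkdef] at this
    linarith
  have hge2 : ∀ i ≤ k, 2 ≤ ns i := by
    intro i hi
    have hik : (i:ℝ) ≤ 5 * L := le_trans (by exact_mod_cast hi) hk5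
    exact hcon i hik
  have hBpos : ∀ i, 0 < B i := fun i => lt_of_lt_of_le (by positivity) (hBlb i)
  -- invariant
  have hBn : ∀ i ≤ k, B i * (ns i : ℝ) = (d:ℝ)^3 * n := by
    intro i
    induction i with
    | zero => intro _; rw [hns0, hB0]
    | succ i ih =>
      intro h
      have hi : i ≤ k := le_trans (Nat.le_succ i) h
      have h2 : 2 ≤ ns (i+1) := hge2 (i+1) h
      have hne : (ns (i+1) : ℝ) ≠ 0 := by positivity
      rw [hBrec i (by omega), div_mul_cancel₀ _ hne, ih hi]
  -- squared recurrence
  have hsq : ∀ i < k, (ns (i+1) : ℝ)^2 * (2 * n) ≤ (ns i : ℝ)^3 := by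
    intro i hik
    have hBi := hBn i hik.le
    have h2i : 2 ≤ ns i := hge2 i hik.le
    set s := Real.sqrt (B i) with hs
    have hs2 : s^2 = B i := Real.sq_sqrt (hBpos i).le
    have hs0 : 0 < s := Real.sqrt_pos.mpr (hBpos i)
    have h1 : (ns (i+1) : ℝ) ≤ (ns i : ℝ) * d / ((d:ℝ) + s) := hstep i (by omega)
    have h2 : (ns i : ℝ) * d / ((d:ℝ) + s) ≤ (ns i : ℝ) * d / s :=
      div_le_div_of_nonneg_left (by positivity) hs0 (by linarith)
    have h3 : (ns (i+1) : ℝ) * s ≤ (ns i : ℝ) * d := by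
      rw [← le_div_iff₀ hs0]; exact h1.trans h2
    have h4 : (ns (i+1) : ℝ)^2 * B i ≤ (ns i : ℝ)^2 * (d:ℝ)^2 := by
      calc (ns (i+1) : ℝ)^2 * B i = ((ns (i+1) : ℝ) * s)^2 := by rw [← hs2]; ring
        _ ≤ ((ns i : ℝ) * d)^2 := pow_le_pow_left₀ (by positivity) h3 2
        _ = (ns i : ℝ)^2 * (d:ℝ)^2 := by ring
    have h5 : (ns (i+1) : ℝ)^2 * ((d:ℝ)^3 * n) ≤ (ns i : ℝ)^3 * (d:ℝ)^2 := by
      calc (ns (i+1) : ℝ)^2 * ((d:ℝ)^3 * n)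
          = ((ns (i+1) : ℝ)^2 * B i) * (ns i : ℝ) := by rw [← hBi]; ring
        _ ≤ ((ns i : ℝ)^2 * (d:ℝ)^2) * (ns i : ℝ) :=
            mul_le_mul_of_nonneg_right h4 (by positivity)
        _ = (ns i : ℝ)^3 * (d:ℝ)^2 := by ring
    have hdd : 2 * (d:ℝ)^2 ≤ (d:ℝ)^3 := by nlinarith
    have h6 : (ns (i+1) : ℝ)^2 * (2 * n) * (d:ℝ)^2 ≤ (ns i : ℝ)^3 * (d:ℝ)^2 := by
      calc (ns (i+1) : ℝ)^2 * (2 * n) * (d:ℝ)^2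
          = ((ns (i+1) : ℝ)^2 * n) * (2 * (d:ℝ)^2) := by ring
        _ ≤ ((ns (i+1) : ℝ)^2 * n) * (d:ℝ)^3 :=
            mul_le_mul_of_nonneg_left hdd (by positivity)
        _ = (ns (i+1) : ℝ)^2 * ((d:ℝ)^3 * n) := by ring
        _ ≤ (ns i : ℝ)^3 * (d:ℝ)^2 := h5
    exact le_of_mul_le_mul_right h6 (by positivity)
  -- main double-exponential bound
  have hmain : ∀ i ≤ k, (ns i : ℝ) ≤ (n:ℝ) * (2:ℝ) ^ ((1:ℝ) - (3/2:ℝ)^i) := by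
    intro i
    induction i with
    | zero => intro _; simp [hns0]
    | succ i ih =>
      intro h
      have hik : i < k := h
      have hMi := ih hik.le
      have hs' := hsq i hik
      set e := (3/2:ℝ)^i with hedef
      have hcube : (ns i : ℝ)^3 ≤ ((n:ℝ) * (2:ℝ) ^ ((1:ℝ) - e))^3 :=
        pow_le_pow_left₀ (by positivity) hMi 3
      have hkey := key_eq9 (n:ℝ) e
      have h2 : (2 * (n:ℝ)) * (ns (i+1) : ℝ)^2 ≤
          (2 * (n:ℝ)) * ((n:ℝ) * (2:ℝ) ^ ((1:ℝ) - (3/2) * e))^2 := by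
        rw [← hkey]
        calc (2 * (n:ℝ)) * (ns (i+1) : ℝ)^2 = (ns (i+1) : ℝ)^2 * (2 * n) := by ring
        _ ≤ (ns i : ℝ)^3 := hs'
        _ ≤ _ := hcube
      have h3 : (ns (i+1) : ℝ)^2 ≤ ((n:ℝ) * (2:ℝ) ^ ((1:ℝ) - (3/2) * e))^2 :=
        le_of_mul_le_mul_left h2 (by positivity)
      have hexp : (3/2:ℝ)^(i+1) = (3/2) * e := by rw [hedef, pow_succ]; ring
      rw [hexp]
      exact le_of_pow_le_pow_left₀ two_ne_zero (by positivity) h3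
  -- final contradiction at i = k
  have hEk : Real.logb 2 n < (3/2:ℝ)^k := by
    have e1 : (3/2:ℝ)^(k:ℕ) = (3/2:ℝ)^((k:ℕ):ℝ) := (Real.rpow_natCast _ _).symm
    have e2 : (3/2:ℝ)^(4*L) < (3/2:ℝ)^((k:ℕ):ℝ) :=
      Real.rpow_lt_rpow_left_iff (by norm_num : (1:ℝ) < 3/2) |>.mpr hk4
    have e3 : Real.logb 2 n ≤ (3/2:ℝ)^(4*L) := by
      have e4 : (3/2:ℝ)^(4*L) = ((3/2:ℝ)^(4:ℝ))^L := by
        rw [← Real.rpow_mul (by norm_num)]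
      have e5 : (3/2:ℝ)^(4:ℝ) = 81/16 := by
        rw [show (4:ℝ) = ((4:ℕ):ℝ) by norm_num, Real.rpow_natCast]; norm_num
      have e6 : (2:ℝ)^L ≤ ((81:ℝ)/16)^L :=
        Real.rpow_le_rpow (by norm_num) (by norm_num) (by linarith)
      have e7 : (2:ℝ)^L = Real.logb 2 n :=
        Real.rpow_logb (by norm_num) (by norm_num) hlogn0
      rw [e4, e5, ← e7]; exact e6
    rw [e1]; exact lt_of_le_of_lt e3 e2
  have hlt : (n:ℝ) * (2:ℝ) ^ ((1:ℝ) - (3/2:ℝ)^k) < 2 := by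
    have h1 : (2:ℝ) ^ ((1:ℝ) - (3/2:ℝ)^k) < (2:ℝ) ^ ((1:ℝ) - Real.logb 2 n) :=
      Real.rpow_lt_rpow_left_iff (by norm_num : (1:ℝ) < 2) |>.mpr (by linarith)
    have h2 : (2:ℝ) ^ ((1:ℝ) - Real.logb 2 n) = 2 / n := by
      rw [sub_eq_add_neg, Real.rpow_add (by norm_num), Real.rpow_one,
        Real.rpow_neg (by norm_num), Real.rpow_logb (by norm_num) (by norm_num) hnpos]
      ring
    calc (n:ℝ) * (2:ℝ) ^ ((1:ℝ) - (3/2:ℝ)^k)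
        < (n:ℝ) * (2 / n) := by
          exact mul_lt_mul_of_pos_left (h2 ▸ h1) hnpos
      _ = 2 := by field_simp
  have hk2 : (2:ℝ) ≤ (ns k : ℝ) := by exact_mod_cast hge2 k le_rfl
  have := hmain k le_rfl
  linarith
end
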